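/- arXiv:1509.02617 — 3 statements merged into one kernel-verified Lean document; each statement's English description precedes it below -/
import Mathlib

section
/- Let A = diag(1, -σ, -σ) with σ² = 1, and suppose M : ℂ → Matrix (Fin 3) (Fin 3) ℂ satisfies -A · conj(M(k̄)) · A = M(k)ᵀ for all k ∈ ℂ. If Ψ : ℝ × ℝ × ℂ → Matrix (Fin 3) (Fin 3) ℂ is differentiable in x with ∂ₓΨ(x,t,k) = M(k) · Ψ(x,t,k) and Ψ(x₀,t,k) is invertible with A · conj(Ψ(x₀,t,k̄))ᵀ · A = Ψ(x₀,t,k)⁻¹, then the function Φ(x) = A · conj(Ψ(x,t,k̄))ᵀ · A satisfies ∂ₓΦ(x) = -Φ(x) · M(k), i.e. Φ is a solution of the adjoint equation. -/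
open Matrix Complex

theorem stmt_1 (σ : ℂ) (hσ : σ = 1 ∨ σ = -1)
    (A : Matrix (Fin 3) (Fin 3) ℂ) (hA : A = Matrix.diagonal ![1, -σ, -σ])
    (M : ℂ → Matrix (Fin 3) (Fin 3) ℂ)
    (hsym : ∀ k : ℂ, -(A * ((M ((starRingEnd ℂ) k)).map (starRingEnd ℂ)) * A) = (M k)ᵀ)
    (Ψ : ℝ → ℝ → ℂ → Matrix (Fin 3) (Fin 3) ℂ) (t : ℝ) (k : ℂ) (x₀ : ℝ)
    (hΨ : ∀ (x : ℝ) (k' : ℂ) (i j : Fin 3),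
      HasDerivAt (fun x => Ψ x t k' i j) ((M k' * Ψ x t k') i j) x)
    (hinv : IsUnit (Ψ x₀ t k))
    (hΨ0 : A * ((Ψ x₀ t ((starRingEnd ℂ) k)).map (starRingEnd ℂ))ᵀ * A = (Ψ x₀ t k)⁻¹) :
    ∀ (x : ℝ) (i j : Fin 3),
      HasDerivAt (fun x => (A * ((Ψ x t ((starRingEnd ℂ) k)).map (starRingEnd ℂ))ᵀ * A) i j)
        ((-(A * ((Ψ x t ((starRingEnd ℂ) k)).map (starRingEnd ℂ))ᵀ * A * M k)) i j) x := by
  have hAt : Aᵀ = A := by rw [hA, Matrix.diagonal_transpose]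
  have hA2 : A * A = 1 := by
    subst hA
    ext i j
    rcases hσ with h | h <;> subst h <;> fin_cases i <;> fin_cases j <;>
      simp [Matrix.mul_apply, Fin.sum_univ_three, Matrix.one_apply]
  set kb := (starRingEnd ℂ) k with hkb
  -- the transposed conjugated symmetry
  have hMc : ((M kb).map (starRingEnd ℂ))ᵀ = -(A * M k * A) := by
    have h := congrArg Matrix.transpose (hsym k)
    rw [Matrix.transpose_neg, Matrix.transpose_mul, Matrix.transpose_mul, hAt,
      Matrix.transpose_transpose] at h
    -- h : -(A * (((M kb).map (starRingEnd ℂ))ᵀ * A)) = M k  (up to assoc)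
    have h2 : A * -(A * (((M kb).map (starRingEnd ℂ))ᵀ * A)) * A = A * M k * A := by
      rw [h]
    rw [Matrix.mul_neg, Matrix.neg_mul, ← Matrix.mul_assoc, ← Matrix.mul_assoc, hA2,
      Matrix.one_mul, Matrix.mul_assoc, hA2, Matrix.mul_one] at h2
    rw [← h2, neg_neg]
  intro x i j
  have h1 : HasDerivAt (fun x => (A * ((Ψ x t kb).map (starRingEnd ℂ))ᵀ * A) i j)
      ((A * ((M kb * Ψ x t kb).map (starRingEnd ℂ))ᵀ * A) i j) x := by
    simp only [Matrix.mul_apply, Matrix.transpose_apply, Matrix.map_apply]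
    apply HasDerivAt.fun_sum
    intro a _
    apply HasDerivAt.mul_const
    apply HasDerivAt.fun_sum
    intro b _
    exact ((hΨ x kb a b).star).const_mul _
  have key : A * ((M kb * Ψ x t kb).map (starRingEnd ℂ))ᵀ * A
      = -(A * ((Ψ x t kb).map (starRingEnd ℂ))ᵀ * A * M k) := by
    rw [Matrix.map_mul, Matrix.transpose_mul, hMc]
    rw [show A * (((Ψ x t kb).map (starRingEnd ℂ))ᵀ * -(A * M k * A)) * A
        = -(A * ((Ψ x t kb).map (starRingEnd ℂ))ᵀ * A * M k * (A * A)) by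
      simp only [Matrix.mul_neg, Matrix.neg_mul, Matrix.mul_assoc]]
    rw [hA2, Matrix.mul_one]
  rw [← key]
  exact h1
end

section
/- Suppose μ₁, μ₂, μ₃, μ₄ : ℝ×ℝ×ℂ → GL(3,ℂ) satisfy μ₁ = μ₂ · e^{θΛ̂}S, μ₃ = μ₂ · e^{θΛ̂}s, μ₄ = μ₃ · e^{(θ - ikL)Λ̂}S_L, where θ = θ(x,t,k) = ikx + 2ik²t and e^{cΛ̂}X = e^{cΛ}Xe^{-cΛ}. If μ₁(0,T,k) = I, then S(k)⁻¹ s(k) e^{-ikLΛ̂}S_L(k) = e^{-2ik²T Λ̂} c(T,k), where c(T,k) := μ₄(0,T,k). (The global relation.) -/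
open Matrix

/-- `e^{cΛ}` for `Λ = diag(-1,1,1)`. -/
noncomputable def expCLam (c : ℂ) : Matrix (Fin 3) (Fin 3) ℂ :=
  Matrix.diagonal ![Complex.exp (-c), Complex.exp c, Complex.exp c]

/-- The conjugation operation `e^{cΛ̂} X = e^{cΛ} X e^{-cΛ}`. -/
noncomputable def hatExp (c : ℂ) (X : Matrix (Fin 3) (Fin 3) ℂ) : Matrix (Fin 3) (Fin 3) ℂ :=
  expCLam c * X * expCLam (-c)

/-- `θ(x,t,k) = ikx + 2ik²t`. -/
noncomputable def theta (x t : ℝ) (k : ℂ) : ℂ :=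
  Complex.I * k * (x : ℂ) + 2 * Complex.I * k ^ 2 * (t : ℂ)

lemma expCLam_mul (a b : ℂ) : expCLam a * expCLam b = expCLam (a + b) := by
  ext i j
  fin_cases i <;> fin_cases j <;>
    simp [expCLam, Matrix.diagonal, Matrix.mul_apply, Fin.sum_univ_three, Complex.exp_add, neg_add, mul_comm]

lemma expCLam_mul_assoc (c d : ℂ) (Y : Matrix (Fin 3) (Fin 3) ℂ) :
    expCLam c * (expCLam d * Y) = expCLam (c + d) * Y := by
  rw [← mul_assoc, expCLam_mul]

lemma expCLam_zero : expCLam 0 = 1 := by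
  simp [expCLam]
  rw [show ![(1:ℂ),1,1] = fun _ => 1 by funext i; fin_cases i <;> rfl]; rfl

lemma expCLam_mul_neg (a : ℂ) : expCLam a * expCLam (-a) = 1 := by
  rw [expCLam_mul, add_neg_cancel, expCLam_zero]

lemma expCLam_neg_mul (a : ℂ) : expCLam (-a) * expCLam a = 1 := by
  rw [expCLam_mul, neg_add_cancel, expCLam_zero]

/-- The global relation. -/
theorem stmt_11 (L T : ℝ) (k : ℂ)
    (μ₁ μ₂ μ₃ μ₄ : ℝ → ℝ → ℂ → Matrix (Fin 3) (Fin 3) ℂ)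
    (s S S_L : ℂ → Matrix (Fin 3) (Fin 3) ℂ)
    (hsU : IsUnit (s k)) (hSU : IsUnit (S k)) (hSLU : IsUnit (S_L k))
    (hμU : ∀ x t, IsUnit (μ₂ x t k))
    (h₁ : ∀ x t, μ₁ x t k = μ₂ x t k * hatExp (theta x t k) (S k))
    (h₃ : ∀ x t, μ₃ x t k = μ₂ x t k * hatExp (theta x t k) (s k))
    (h₄ : ∀ x t, μ₄ x t k = μ₃ x t k * hatExp (theta x t k - Complex.I * k * (L : ℂ)) (S_L k))
    (hinit : μ₁ 0 T k = 1) :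
    (S k)⁻¹ * (s k * hatExp (-(Complex.I * k * (L : ℂ))) (S_L k)) =
      hatExp (-(2 * Complex.I * k ^ 2 * (T : ℂ))) (μ₄ 0 T k) := by
  set a : ℂ := 2 * Complex.I * k ^ 2 * (T : ℂ) with ha
  set b : ℂ := Complex.I * k * (L : ℂ) with hb
  have hθ : theta 0 T k = a := by simp [theta, ha]
  have hinit' : μ₂ 0 T k * hatExp a (S k) = 1 := by
    rw [← hθ, ← h₁, hinit]
  have hSinv : (S k)⁻¹ = expCLam (-a) * μ₂ 0 T k * expCLam a := by
    apply Matrix.inv_eq_left_inv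
    have : expCLam (-a) * (μ₂ 0 T k * hatExp a (S k)) * expCLam a
        = expCLam (-a) * 1 * expCLam a := by rw [hinit']
    calc expCLam (-a) * μ₂ 0 T k * expCLam a * S k
        = expCLam (-a) * (μ₂ 0 T k * hatExp a (S k)) * expCLam a := by
          simp only [hatExp, mul_assoc]
          rw [expCLam_neg_mul]
          simp [mul_assoc]
      _ = 1 := by rw [hinit']; rw [mul_one, expCLam_neg_mul]
  have hμ₄ : μ₄ 0 T k = μ₂ 0 T k * hatExp a (s k) * hatExp (a - b) (S_L k) := by
    rw [h₄, h₃, hθ]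
  rw [hSinv, hμ₄]
  simp only [hatExp, mul_assoc, expCLam_mul_assoc, expCLam_mul]
  rw [show (-a) + (a - b) = -b by ring, show -(a - b) + - -a = - -b by ring]
end

section
/- Let Λ = diag(-1,1,1), and let V₁ be the matrix with rows (0, q₁, q₂), (σq̄₁, 0, 0), (σq̄₂, 0, 0) and V₂ = 2kV₁ + iΛ(V₁² - V₁ₓ), where q₁, q₂ : ℝ² → ℂ are smooth. Then the zero-curvature (compatibility) condition U_t - V_x + [U, V] = 0 with U = ikΛ + V₁ and V = 2ik²Λ + V₂ holds identically in k if and only if q₁ and q₂ satisfy the 2-component NLS system i q₁ₜ + q₁ₓₓ - 2σ(|q₁|² + |q₂|²)q₁ = 0 and i q₂ₜ + q₂ₓₓ - 2σ(|q₁|² + |q₂|²)q₂ = 0. -/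
/-!
Write `P` for `V₁`. Since `Λ² = 1` and `P`, `Pₓ` anticommute with `Λ` (so `P²` commutes with it),
all `k`-dependent terms of `U_t - V_x + [U, V]` cancel and it reduces to `P_t + iΛ(P_xx - 2P³)`.
For `σ = ±1` this matrix has again the shape of `V₁`, with entries `-i` times the two NLS
residuals, so it vanishes exactly when both NLS equations hold.
-/

open Matrix Complex

section ZeroCurvature

variable {A : Type*} [Ring A] [Algebra ℂ A]

theorem zeroCurvature_eq_of_anticomm {Λ P Px : A} (hΛ : Λ * Λ = 1)
    (hP : P * Λ = -(Λ * P)) (hPx : Px * Λ = -(Λ * Px)) (Pt Pxx : A) (k : ℂ) :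
    Pt - ((2 * k) • Px + I • (Λ * (Px * P + P * Px - Pxx)))
      + (((I * k) • Λ + P) * ((2 * I * k ^ 2) • Λ + (2 * k) • P + I • (Λ * (P * P - Px)))
        - ((2 * I * k ^ 2) • Λ + (2 * k) • P + I • (Λ * (P * P - Px))) * ((I * k) • Λ + P))
      = Pt + I • (Λ * (Pxx - 2 • (P * P * P))) := by
  have hΛ' : ∀ X : A, Λ * (Λ * X) = X := fun X => by rw [← mul_assoc, hΛ, one_mul]
  have hP' : ∀ X : A, P * (Λ * X) = -(Λ * (P * X)) := fun X => by
    rw [← mul_assoc, hP, neg_mul, mul_assoc]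
  have hPx' : ∀ X : A, Px * (Λ * X) = -(Λ * (Px * X)) := fun X => by
    rw [← mul_assoc, hPx, neg_mul, mul_assoc]
  simp only [mul_add, add_mul, mul_sub, sub_mul, smul_mul_assoc, mul_smul_comm, mul_assoc,
    mul_neg, smul_neg, hP, hPx, hP', hΛ, hΛ']
  match_scalars <;> ring_nf
  linear_combination -(2 * k) * I_sq

end ZeroCurvature

def nlsPotential (σ a b : ℂ) : Matrix (Fin 3) (Fin 3) ℂ :=
  !![0, a, b; σ * starRingEnd ℂ a, 0, 0; σ * starRingEnd ℂ b, 0, 0]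

local notation "Λ₃" => diagonal ![(-1 : ℂ), 1, 1]

theorem diagonal_neg_one_one_one_mul_self : Λ₃ * Λ₃ = 1 := by
  rw [diagonal_mul_diagonal, ← diagonal_one]
  congr 1
  ext i
  fin_cases i <;> simp

theorem nlsPotential_mul_diagonal (σ a b : ℂ) :
    nlsPotential σ a b * Λ₃ = -(Λ₃ * nlsPotential σ a b) := by
  ext i j
  fin_cases i <;> fin_cases j <;> simp [nlsPotential]

theorem nlsPotential_eq_zero_iff {σ a b : ℂ} : nlsPotential σ a b = 0 ↔ a = 0 ∧ b = 0 := by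
  refine ⟨fun h => ⟨?_, ?_⟩, ?_⟩
  · simpa [nlsPotential] using congrFun (congrFun h 0) 1
  · simpa [nlsPotential] using congrFun (congrFun h 0) 2
  · rintro ⟨rfl, rfl⟩
    ext i j
    fin_cases i <;> fin_cases j <;> simp [nlsPotential]

theorem nlsPotential_add_I_smul_eq {σ : ℂ} (hσ : σ = 1 ∨ σ = -1) (a b aₜ bₜ aₓₓ bₓₓ : ℂ) :
    nlsPotential σ aₜ bₜ + I • (Λ₃ * (nlsPotential σ aₓₓ bₓₓ
        - 2 • (nlsPotential σ a b * nlsPotential σ a b * nlsPotential σ a b)))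
      = nlsPotential σ
          (-I * (I * aₜ + aₓₓ - 2 * σ * ((‖a‖ : ℂ) ^ 2 + (‖b‖ : ℂ) ^ 2) * a))
          (-I * (I * bₜ + bₓₓ - 2 * σ * ((‖a‖ : ℂ) ^ 2 + (‖b‖ : ℂ) ^ 2) * b)) := by
  simp only [← mul_conj']
  ext i j
  rcases hσ with rfl | rfl <;> fin_cases i <;> fin_cases j <;>
    simp [nlsPotential, Matrix.mul_apply, Fin.sum_univ_three, map_ofNat] <;>
    ring_nf <;> simp only [I_sq] <;> ring

theorem stmt_19_general (σ : ℂ) (hσ : σ = 1 ∨ σ = -1)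
    (q₁ q₂ q₁x q₂x q₁t q₂t q₁xx q₂xx : ℝ → ℝ → ℂ)
    (Λ : Matrix (Fin 3) (Fin 3) ℂ) (hΛ : Λ = Matrix.diagonal ![-1, 1, 1])
    (V₁ V₁x V₁xx Ut : ℝ → ℝ → Matrix (Fin 3) (Fin 3) ℂ)
    (hV₁ : ∀ x t, V₁ x t = !![0, q₁ x t, q₂ x t;
      σ * (starRingEnd ℂ) (q₁ x t), 0, 0; σ * (starRingEnd ℂ) (q₂ x t), 0, 0])
    (hV₁x : ∀ x t, V₁x x t = !![0, q₁x x t, q₂x x t;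
      σ * (starRingEnd ℂ) (q₁x x t), 0, 0; σ * (starRingEnd ℂ) (q₂x x t), 0, 0])
    (hV₁xx : ∀ x t, V₁xx x t = !![0, q₁xx x t, q₂xx x t;
      σ * (starRingEnd ℂ) (q₁xx x t), 0, 0; σ * (starRingEnd ℂ) (q₂xx x t), 0, 0])
    -- the t-derivative of U = ikΛ + V₁
    (hUt : ∀ x t, Ut x t = !![0, q₁t x t, q₂t x t;
      σ * (starRingEnd ℂ) (q₁t x t), 0, 0; σ * (starRingEnd ℂ) (q₂t x t), 0, 0])
    (U V Vx : ℂ → ℝ → ℝ → Matrix (Fin 3) (Fin 3) ℂ)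
    (hU : ∀ k x t, U k x t = (Complex.I * k) • Λ + V₁ x t)
    -- V = 2ik²Λ + V₂ with V₂ = 2kV₁ + iΛ(V₁² - V₁ₓ)
    (hV : ∀ k x t, V k x t = (2 * Complex.I * k ^ 2) • Λ + (2 * k) • V₁ x t
      + Complex.I • (Λ * (V₁ x t * V₁ x t - V₁x x t)))
    -- the x-derivative of V
    (hVx : ∀ k x t, Vx k x t = (2 * k) • V₁x x t
      + Complex.I • (Λ * (V₁x x t * V₁ x t + V₁ x t * V₁x x t - V₁xx x t))) :
    (∀ (k : ℂ) (x t : ℝ),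
        Ut x t - Vx k x t + (U k x t * V k x t - V k x t * U k x t) = 0) ↔
    (∀ x t : ℝ,
        Complex.I * q₁t x t + q₁xx x t
          - 2 * σ * ((‖q₁ x t‖ : ℂ) ^ 2 + (‖q₂ x t‖ : ℂ) ^ 2) * q₁ x t = 0 ∧
        Complex.I * q₂t x t + q₂xx x t
          - 2 * σ * ((‖q₁ x t‖ : ℂ) ^ 2 + (‖q₂ x t‖ : ℂ) ^ 2) * q₂ x t = 0) := by
  subst hΛ
  have hcurv : ∀ k x t, Ut x t - Vx k x t + (U k x t * V k x t - V k x t * U k x t)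
      = nlsPotential σ
          (-I * (I * q₁t x t + q₁xx x t
            - 2 * σ * ((‖q₁ x t‖ : ℂ) ^ 2 + (‖q₂ x t‖ : ℂ) ^ 2) * q₁ x t))
          (-I * (I * q₂t x t + q₂xx x t
            - 2 * σ * ((‖q₁ x t‖ : ℂ) ^ 2 + (‖q₂ x t‖ : ℂ) ^ 2) * q₂ x t)) := by
    intro k x t
    rw [hU, hV, hVx, zeroCurvature_eq_of_anticomm diagonal_neg_one_one_one_mul_self
      (hV₁ x t ▸ nlsPotential_mul_diagonal _ _ _) (hV₁x x t ▸ nlsPotential_mul_diagonal _ _ _),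
      hUt, hV₁, hV₁xx]
    exact nlsPotential_add_I_smul_eq hσ ..
  simp only [hcurv, nlsPotential_eq_zero_iff, mul_eq_zero, neg_eq_zero, I_ne_zero, false_or,
    forall_const]

theorem stmt_19 (σ : ℂ) (hσ : σ = 1 ∨ σ = -1)
    (q₁ q₂ q₁x q₂x q₁t q₂t q₁xx q₂xx : ℝ → ℝ → ℂ)
    -- the named functions are genuine partial derivatives
    (hq₁x : ∀ x t, HasDerivAt (fun x => q₁ x t) (q₁x x t) x)
    (hq₂x : ∀ x t, HasDerivAt (fun x => q₂ x t) (q₂x x t) x)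
    (hq₁t : ∀ x t, HasDerivAt (fun t => q₁ x t) (q₁t x t) t)
    (hq₂t : ∀ x t, HasDerivAt (fun t => q₂ x t) (q₂t x t) t)
    (hq₁xx : ∀ x t, HasDerivAt (fun x => q₁x x t) (q₁xx x t) x)
    (hq₂xx : ∀ x t, HasDerivAt (fun x => q₂x x t) (q₂xx x t) x)
    (Λ : Matrix (Fin 3) (Fin 3) ℂ) (hΛ : Λ = Matrix.diagonal ![-1, 1, 1])
    (V₁ V₁x V₁xx Ut : ℝ → ℝ → Matrix (Fin 3) (Fin 3) ℂ)
    (hV₁ : ∀ x t, V₁ x t = !![0, q₁ x t, q₂ x t;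
      σ * (starRingEnd ℂ) (q₁ x t), 0, 0; σ * (starRingEnd ℂ) (q₂ x t), 0, 0])
    (hV₁x : ∀ x t, V₁x x t = !![0, q₁x x t, q₂x x t;
      σ * (starRingEnd ℂ) (q₁x x t), 0, 0; σ * (starRingEnd ℂ) (q₂x x t), 0, 0])
    (hV₁xx : ∀ x t, V₁xx x t = !![0, q₁xx x t, q₂xx x t;
      σ * (starRingEnd ℂ) (q₁xx x t), 0, 0; σ * (starRingEnd ℂ) (q₂xx x t), 0, 0])
    -- the t-derivative of U = ikΛ + V₁
    (hUt : ∀ x t, Ut x t = !![0, q₁t x t, q₂t x t;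
      σ * (starRingEnd ℂ) (q₁t x t), 0, 0; σ * (starRingEnd ℂ) (q₂t x t), 0, 0])
    (U V Vx : ℂ → ℝ → ℝ → Matrix (Fin 3) (Fin 3) ℂ)
    (hU : ∀ k x t, U k x t = (Complex.I * k) • Λ + V₁ x t)
    -- V = 2ik²Λ + V₂ with V₂ = 2kV₁ + iΛ(V₁² - V₁ₓ)
    (hV : ∀ k x t, V k x t = (2 * Complex.I * k ^ 2) • Λ + (2 * k) • V₁ x t
      + Complex.I • (Λ * (V₁ x t * V₁ x t - V₁x x t)))
    -- the x-derivative of V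
    (hVx : ∀ k x t, Vx k x t = (2 * k) • V₁x x t
      + Complex.I • (Λ * (V₁x x t * V₁ x t + V₁ x t * V₁x x t - V₁xx x t))) :
    (∀ (k : ℂ) (x t : ℝ),
        Ut x t - Vx k x t + (U k x t * V k x t - V k x t * U k x t) = 0) ↔
    (∀ x t : ℝ,
        Complex.I * q₁t x t + q₁xx x t
          - 2 * σ * ((‖q₁ x t‖ : ℂ) ^ 2 + (‖q₂ x t‖ : ℂ) ^ 2) * q₁ x t = 0 ∧
        Complex.I * q₂t x t + q₂xx x t
          - 2 * σ * ((‖q₁ x t‖ : ℂ) ^ 2 + (‖q₂ x t‖ : ℂ) ^ 2) * q₂ x t = 0) :=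
  stmt_19_general σ hσ q₁ q₂ q₁x q₂x q₁t q₂t q₁xx q₂xx Λ hΛ V₁ V₁x V₁xx Ut hV₁ hV₁x hV₁xx hUt U V Vx
    hU hV hVx
end
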